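/- Let k, h ≥ 2 be integers and d > 0 a real number. Define f : ℝ^k × ℝ^h → ℝ by f(x,y) = (1/4)(u − v)v^d, where u = (h−1)|x|^2 and v = (k−1)|y|^2. Then at every point (x,y) with y ≠ 0: (i) |∇f|^2 = ((h−1)/4) · u · v^{2d} + ((k−1)/4) · v · ( d u v^{d−1} − (d+1)v^d )^2; and (ii) wherever in addition ∇f ≠ 0, writing g = ∇f/|∇f|, |∇f|^3 · div g = ((h−1)(k−1)/8) (u − v) v^{3d−2} [ d^3 (k−1) u^2 + d( h − 2 + d + 2d^2 − 2d(1+d)k ) u v + (d+1)^2 ( d(k−1) − 1 ) v^2 ]. -/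

import Mathlib

open MeasureTheory
open scoped RealInnerProductSpace ENNReal

noncomputable section

/-- Euclidean norm of the first (`ℝ^k`) component of `z = (x, y)`. -/
def nX (k h : ℕ) (z : EuclideanSpace ℝ (Fin (k + h))) : ℝ :=
  Real.sqrt (∑ i : Fin k, (z (Fin.castAdd h i)) ^ 2)

/-- Euclidean norm of the second (`ℝ^h`) component of `z = (x, y)`. -/
def nY (k h : ℕ) (z : EuclideanSpace ℝ (Fin (k + h))) : ℝ :=
  Real.sqrt (∑ j : Fin h, (z (Fin.natAdd k j)) ^ 2)

/-- The Lawson cone `M_{kh}`. -/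
def Mset (k h : ℕ) : Set (EuclideanSpace ℝ (Fin (k + h))) :=
  {z | nX k h z / Real.sqrt ((k : ℝ) - 1) = nY k h z / Real.sqrt ((h : ℝ) - 1)}

/-- The open region `K_{kh}` bounded by the Lawson cone. -/
def Kset (k h : ℕ) : Set (EuclideanSpace ℝ (Fin (k + h))) :=
  {z | nX k h z / Real.sqrt ((k : ℝ) - 1) < nY k h z / Real.sqrt ((h : ℝ) - 1)}

/-- The cylinder `H_R = B_R^k × B_R^h`. -/
def Hset (k h : ℕ) (R : ℝ) : Set (EuclideanSpace ℝ (Fin (k + h))) :=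
  {z | nX k h z < R ∧ nY k h z < R}

/-- The exceptional set `S` of pairs. -/
def S : Set (ℕ × ℕ) := {(3, 5), (2, 7), (2, 8), (2, 9), (2, 10), (2, 11)}

/-- Divergence of a vector field, as the trace of its derivative
(equivalently `∑ i, ∂ᵢ gᵢ`). -/
def divg {n : ℕ} (g : EuclideanSpace ℝ (Fin n) → EuclideanSpace ℝ (Fin n))
    (z : EuclideanSpace ℝ (Fin n)) : ℝ :=
  LinearMap.trace ℝ _ (fderiv ℝ g z).toLinearMap

/-- `u = (h-1)|x|^2`. -/
def uG (k h : ℕ) (z : EuclideanSpace ℝ (Fin (k + h))) : ℝ := ((h : ℝ) - 1) * nX k h z ^ 2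

/-- `v = (k-1)|y|^2`. -/
def vG (k h : ℕ) (z : EuclideanSpace ℝ (Fin (k + h))) : ℝ := ((k : ℝ) - 1) * nY k h z ^ 2

/-- `f(x,y) = (1/4)(u - v)v^d`. -/
def fV (k h : ℕ) (d : ℝ) (z : EuclideanSpace ℝ (Fin (k + h))) : ℝ :=
  (1 / 4) * (uG k h z - vG k h z) * vG k h z ^ d

/-! Write `x`, `y` for the two blocks of coordinates. Then `f` is a function of `|x|²` and `|y|²`,
and `∇f = a x + b y` with `a`, `b` again functions of `|x|²`, `|y|²`, whose gradients are in
turn of the form `α x + β y`. For any vector field `G` with `G z ≠ 0`,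
`|G|³ div (G / |G|) = |G|² div G - ⟪G, DG G⟫`, and for `G = a x + b y` both terms are read off
from `a`, `b` and the coefficients of their gradients. Substituting the explicit coefficients
leaves polynomial identities. -/

open InnerProductSpace Filter Topology

theorem HasFDerivAt.hasGradientAt_of_apply {F : Type*} [NormedAddCommGroup F]
    [InnerProductSpace ℝ F] [CompleteSpace F] {φ : F → ℝ} {φ' : F →L[ℝ] ℝ} {g x : F}
    (hφ : HasFDerivAt φ φ' x) (h : ∀ w, φ' w = ⟪g, w⟫) : HasGradientAt φ g x :=
  hasGradientAt_iff_hasFDerivAt.2 (hφ.congr_fderiv (ContinuousLinearMap.ext h))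

theorem HasFDerivAt.inv_norm {E F : Type*} [NormedAddCommGroup E]
    [NormedSpace ℝ E] [NormedAddCommGroup F] [InnerProductSpace ℝ F] {G : E → F}
    {D : E →L[ℝ] F} {z : E} (hG : HasFDerivAt G D z) (hz : G z ≠ 0) :
    HasFDerivAt (fun w => ‖G w‖⁻¹) (-(‖G z‖ ^ 3)⁻¹ • (innerSL ℝ (G z)).comp D) z := by
  have hpos : 0 < ‖G z‖ := norm_pos_iff.mpr hz
  have hnorm := hG.norm_sq.sqrt (by positivity)
  simp only [Real.sqrt_sq (norm_nonneg _)] at hnorm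
  refine ((hasDerivAt_inv hpos.ne').comp_hasFDerivAt z hnorm).congr_fderiv ?_
  ext w
  simp only [one_div, mul_inv_rev, neg_smul, neg_apply, smul_apply,
    ContinuousLinearMap.comp_apply, coe_innerSL_apply, nsmul_eq_mul, Nat.cast_ofNat, smul_eq_mul,
    neg_inj]
  field_simp

section Divergence

variable {n : ℕ} {z : EuclideanSpace ℝ (Fin n)}
  {G : EuclideanSpace ℝ (Fin n) → EuclideanSpace ℝ (Fin n)}
  {D : EuclideanSpace ℝ (Fin n) →L[ℝ] EuclideanSpace ℝ (Fin n)}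

theorem HasFDerivAt.divg_eq (hG : HasFDerivAt G D z) :
    divg G z = LinearMap.trace ℝ _ D.toLinearMap := by
  rw [divg, hG.fderiv]

theorem HasFDerivAt.norm_pow_three_mul_divg_normalize (hG : HasFDerivAt G D z) (hz : G z ≠ 0) :
    ‖G z‖ ^ 3 * divg (fun w => ‖G w‖⁻¹ • G w) z =
      ‖G z‖ ^ 2 * LinearMap.trace ℝ _ D.toLinearMap - ⟪G z, D (G z)⟫ := by
  have hpos : 0 < ‖G z‖ := norm_pos_iff.mpr hz
  rw [((hG.inv_norm hz).fun_smul hG).divg_eq]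
  simp only [neg_smul, ContinuousLinearMap.toLinearMap_add, ContinuousLinearMap.toLinearMap_smul,
    ContinuousLinearMap.coe_smulRight, ContinuousLinearMap.toLinearMap_neg,
    ContinuousLinearMap.toLinearMap_comp, ContinuousLinearMap.toLinearMap_innerSL_apply, map_add,
    map_smul, smul_eq_mul, LinearMap.trace_smulRight, LinearMap.neg_apply, LinearMap.smul_apply,
    LinearMap.coe_comp, coe_innerₛₗ_apply, ContinuousLinearMap.coe_coe, Function.comp_apply]
  field_simp
  ring

end Divergence

section CoordProj

variable {ι : Type*} [Fintype ι] [DecidableEq ι] (s : Finset ι)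

def coordProj : EuclideanSpace ℝ ι →L[ℝ] EuclideanSpace ℝ ι :=
  LinearMap.toContinuousLinearMap
    { toFun := fun w => WithLp.toLp 2 fun i => if i ∈ s then w i else 0
      map_add' := fun v w => by ext i; by_cases hi : i ∈ s <;> simp [hi]
      map_smul' := fun c w => by ext i; by_cases hi : i ∈ s <;> simp [hi] }

@[simp]
theorem coordProj_apply (w : EuclideanSpace ℝ ι) (i : ι) :
    coordProj s w i = if i ∈ s then w i else 0 :=
  rfl

theorem coordProj_coordProj (t : Finset ι) (w : EuclideanSpace ℝ ι) :
    coordProj s (coordProj t w) = coordProj (s ∩ t) w := by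
  ext i
  by_cases hs : i ∈ s <;> by_cases ht : i ∈ t <;> simp [hs, ht]

theorem coordProj_self (w : EuclideanSpace ℝ ι) :
    coordProj s (coordProj s w) = coordProj s w := by
  rw [coordProj_coordProj, Finset.inter_self]

theorem coordProj_compl_coordProj (w : EuclideanSpace ℝ ι) :
    coordProj sᶜ (coordProj s w) = 0 := by
  ext i
  by_cases hs : i ∈ s <;> simp [hs]

theorem coordProj_coordProj_compl (w : EuclideanSpace ℝ ι) :
    coordProj s (coordProj sᶜ w) = 0 := by
  ext i
  by_cases hs : i ∈ s <;> simp [hs]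

theorem inner_coordProj_left (v w : EuclideanSpace ℝ ι) :
    ⟪coordProj s v, w⟫ = ⟪coordProj s v, coordProj s w⟫ := by
  simp only [PiLp.inner_apply, coordProj_apply]
  refine Finset.sum_congr rfl fun i _ => ?_
  split_ifs <;> simp

theorem inner_coordProj_coordProj_compl (v w : EuclideanSpace ℝ ι) :
    ⟪coordProj s v, coordProj sᶜ w⟫ = 0 := by
  simp only [PiLp.inner_apply, coordProj_apply]
  refine Finset.sum_eq_zero fun i _ => ?_
  by_cases hs : i ∈ s <;> simp [hs]

theorem inner_coordProj_compl_coordProj (v w : EuclideanSpace ℝ ι) :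
    ⟪coordProj sᶜ v, coordProj s w⟫ = 0 := by
  rw [real_inner_comm, inner_coordProj_coordProj_compl]

theorem norm_smul_coordProj_add_smul_coordProj_compl_sq (α β : ℝ) (w : EuclideanSpace ℝ ι) :
    ‖α • coordProj s w + β • coordProj sᶜ w‖ ^ 2 =
      α ^ 2 * ‖coordProj s w‖ ^ 2 + β ^ 2 * ‖coordProj sᶜ w‖ ^ 2 := by
  rw [norm_add_sq_real, inner_smul_left, inner_smul_right, inner_coordProj_coordProj_compl,
    norm_smul, norm_smul]
  simp [mul_pow]

theorem norm_coordProj_sq (w : EuclideanSpace ℝ ι) :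
    ‖coordProj s w‖ ^ 2 = ∑ i ∈ s, w i ^ 2 := by
  simp [EuclideanSpace.norm_sq_eq, apply_ite, Finset.sum_ite_mem]

theorem trace_coordProj :
    LinearMap.trace ℝ _ (coordProj s).toLinearMap = s.card := by
  rw [LinearMap.trace_eq_sum_inner _ (EuclideanSpace.basisFun ι ℝ)]
  simp [EuclideanSpace.inner_single_left]

theorem hasGradientAt_norm_coordProj_sq (z : EuclideanSpace ℝ ι) :
    HasGradientAt (fun w => ‖coordProj s w‖ ^ 2) ((2 : ℝ) • coordProj s z) z := by
  refine (coordProj s).hasFDerivAt.norm_sq.congr_fderiv ?_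
  ext w
  simp [inner_coordProj_left s z w]

end CoordProj

theorem norm_pow_three_mul_divg_normalize_biradial {n : ℕ} {s : Finset (Fin n)}
    {z : EuclideanSpace ℝ (Fin n)} {F : EuclideanSpace ℝ (Fin n) → EuclideanSpace ℝ (Fin n)}
    {a b : EuclideanSpace ℝ (Fin n) → ℝ} {a₁ a₂ b₁ b₂ : ℝ}
    (ha : HasGradientAt a (a₁ • coordProj s z + a₂ • coordProj sᶜ z) z)
    (hb : HasGradientAt b (b₁ • coordProj s z + b₂ • coordProj sᶜ z) z)
    (hF : F =ᶠ[𝓝 z] fun w => a w • coordProj s w + b w • coordProj sᶜ w) (hFz : F z ≠ 0) :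
    ‖F z‖ ^ 3 * divg (fun w => ‖F w‖⁻¹ • F w) z =
      (a z ^ 2 * ‖coordProj s z‖ ^ 2 + b z ^ 2 * ‖coordProj sᶜ z‖ ^ 2) *
          (s.card * a z + sᶜ.card * b z + a₁ * ‖coordProj s z‖ ^ 2 + b₂ * ‖coordProj sᶜ z‖ ^ 2)
        - (a z * (a z ^ 2 + a₁ * a z * ‖coordProj s z‖ ^ 2 + a₂ * b z * ‖coordProj sᶜ z‖ ^ 2)
              * ‖coordProj s z‖ ^ 2
          + b z * (b z ^ 2 + b₁ * a z * ‖coordProj s z‖ ^ 2 + b₂ * b z * ‖coordProj sᶜ z‖ ^ 2)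
              * ‖coordProj sᶜ z‖ ^ 2) := by
  have hD := ((ha.hasFDerivAt.smul (coordProj s).hasFDerivAt).add
    (hb.hasFDerivAt.smul (coordProj sᶜ).hasFDerivAt)).congr_of_eventuallyEq hF
  rw [hD.norm_pow_three_mul_divg_normalize hFz, hF.eq_of_nhds,
    norm_smul_coordProj_add_smul_coordProj_compl_sq]
  simp only [map_add, map_smul, ContinuousLinearMap.toLinearMap_add,
    ContinuousLinearMap.toLinearMap_smul, ContinuousLinearMap.coe_smulRight, trace_coordProj,
    smul_eq_mul, LinearMap.trace_smulRight, LinearMap.add_apply, LinearMap.smul_apply,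
    ContinuousLinearMap.coe_coe, toDual_apply_apply, inner_self_eq_norm_sq_to_K,
    Real.ringHom_apply, inner_coordProj_compl_coordProj, inner_coordProj_coordProj_compl,
    mul_zero, add_zero, zero_add, add_apply, smul_apply, coordProj_self,
    coordProj_coordProj_compl, coordProj_compl_coordProj, smul_zero,
    ContinuousLinearMap.smulRight_apply, inner_add_right, inner_smul_right, inner_add_left,
    inner_smul_left]
  ring

section LawsonFunction

variable {k h : ℕ} {d : ℝ} {z : EuclideanSpace ℝ (Fin (k + h))}

def xCoords (k h : ℕ) : Finset (Fin (k + h)) := Finset.univ.map (Fin.castAddEmb h)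

theorem card_xCoords : (xCoords k h).card = k := by
  simp [xCoords]

theorem card_xCoords_compl : (xCoords k h)ᶜ.card = h := by
  rw [Finset.card_compl, card_xCoords, Fintype.card_fin, Nat.add_sub_cancel_left]

theorem nX_sq : nX k h z ^ 2 = ‖coordProj (xCoords k h) z‖ ^ 2 := by
  rw [nX, Real.sq_sqrt (by positivity), norm_coordProj_sq, xCoords, Finset.sum_map]
  rfl

theorem nY_sq : nY k h z ^ 2 = ‖coordProj (xCoords k h)ᶜ z‖ ^ 2 := by
  rw [nY, Real.sq_sqrt (by positivity), norm_coordProj_sq,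
    eq_sub_of_add_eq (Finset.sum_compl_add_sum (xCoords k h) fun i => z i ^ 2),
    Fin.sum_univ_add, xCoords, Finset.sum_map]
  simp

theorem uG_eq : uG k h z = ((h : ℝ) - 1) * ‖coordProj (xCoords k h) z‖ ^ 2 := by
  rw [uG, nX_sq]

theorem vG_eq : vG k h z = ((k : ℝ) - 1) * ‖coordProj (xCoords k h)ᶜ z‖ ^ 2 := by
  rw [vG, nY_sq]

theorem vG_pos (hk : 2 ≤ k) (hy : nY k h z ≠ 0) : 0 < vG k h z := by
  have hk' : (2 : ℝ) ≤ k := by exact_mod_cast hk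
  exact mul_pos (by linarith) (by positivity)

theorem hasGradientAt_uG :
    HasGradientAt (uG k h) ((2 * ((h : ℝ) - 1)) • coordProj (xCoords k h) z) z := by
  have := (hasGradientAt_norm_coordProj_sq (xCoords k h) z).hasFDerivAt.const_mul ((h : ℝ) - 1)
  rw [show uG k h = fun w => ((h : ℝ) - 1) * ‖coordProj (xCoords k h) w‖ ^ 2 from
    funext fun _ => uG_eq]
  refine this.hasGradientAt_of_apply fun w => ?_
  simp only [map_smul, smul_apply, toDual_apply_apply, smul_eq_mul, inner_smul_left,
    Real.ringHom_apply]
  ring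

theorem hasGradientAt_vG :
    HasGradientAt (vG k h) ((2 * ((k : ℝ) - 1)) • coordProj (xCoords k h)ᶜ z) z := by
  have := (hasGradientAt_norm_coordProj_sq (xCoords k h)ᶜ z).hasFDerivAt.const_mul ((k : ℝ) - 1)
  rw [show vG k h = fun w => ((k : ℝ) - 1) * ‖coordProj (xCoords k h)ᶜ w‖ ^ 2 from
    funext fun _ => vG_eq]
  refine this.hasGradientAt_of_apply fun w => ?_
  simp only [map_smul, smul_apply, toDual_apply_apply, smul_eq_mul, inner_smul_left,
    Real.ringHom_apply]
  ring

def gradCoeffX (k h : ℕ) (d : ℝ) (z : EuclideanSpace ℝ (Fin (k + h))) : ℝ :=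
  ((h : ℝ) - 1) / 2 * vG k h z ^ d

def gradCoeffY (k h : ℕ) (d : ℝ) (z : EuclideanSpace ℝ (Fin (k + h))) : ℝ :=
  ((k : ℝ) - 1) / 2 * (d * uG k h z * vG k h z ^ (d - 1) - (d + 1) * vG k h z ^ d)

theorem hasGradientAt_fV (hv : 0 < vG k h z) :
    HasGradientAt (fV k h d) (gradCoeffX k h d z • coordProj (xCoords k h) z
      + gradCoeffY k h d z • coordProj (xCoords k h)ᶜ z) z := by
  have hv' := hasGradientAt_vG (z := z)
  refine (((hasGradientAt_uG.hasFDerivAt.sub hv'.hasFDerivAt).const_mul (1 / 4 : ℝ)).mul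
    (hv'.hasFDerivAt.rpow_const (p := d) (Or.inl hv.ne'))).hasGradientAt_of_apply fun w => ?_
  simp only [one_div, Pi.sub_apply, Real.rpow_sub_one hv.ne', map_smul, add_apply, smul_apply,
    toDual_apply_apply, smul_eq_mul, sub_apply, gradCoeffX, gradCoeffY, inner_add_left,
    inner_smul_left, Real.ringHom_apply]
  field_simp
  ring

theorem hasGradientAt_gradCoeffX (hv : 0 < vG k h z) :
    HasGradientAt (gradCoeffX k h d) ((0 : ℝ) • coordProj (xCoords k h) z
      + (((h : ℝ) - 1) * ((k : ℝ) - 1) * d * vG k h z ^ (d - 1))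
          • coordProj (xCoords k h)ᶜ z) z := by
  refine ((hasGradientAt_vG.hasFDerivAt.rpow_const (p := d) (Or.inl hv.ne')).const_mul
    (((h : ℝ) - 1) / 2)).hasGradientAt_of_apply fun w => ?_
  simp only [map_smul, smul_apply, toDual_apply_apply, smul_eq_mul, zero_smul, zero_add,
    inner_smul_left, Real.ringHom_apply]
  ring

theorem hasGradientAt_gradCoeffY (hv : 0 < vG k h z) :
    HasGradientAt (gradCoeffY k h d)
      ((((k : ℝ) - 1) * ((h : ℝ) - 1) * d * vG k h z ^ (d - 1)) • coordProj (xCoords k h) z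
      + (((k : ℝ) - 1) ^ 2 * d * ((d - 1) * uG k h z * vG k h z ^ (d - 2)
          - (d + 1) * vG k h z ^ (d - 1))) • coordProj (xCoords k h)ᶜ z) z := by
  have hv' := hasGradientAt_vG (z := z)
  refine ((((hasGradientAt_uG.hasFDerivAt.const_mul d).mul
    (hv'.hasFDerivAt.rpow_const (p := d - 1) (Or.inl hv.ne'))).sub
    ((hv'.hasFDerivAt.rpow_const (p := d) (Or.inl hv.ne')).const_mul (d + 1))).const_mul
    (((k : ℝ) - 1) / 2)).hasGradientAt_of_apply fun w => ?_
  simp only [show d - 1 - 1 = d - 2 by ring, map_smul, smul_apply, sub_apply, add_apply,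
    toDual_apply_apply, smul_eq_mul, inner_add_left, inner_smul_left, Real.ringHom_apply]
  ring

theorem gradient_fV_eventuallyEq (hv : 0 < vG k h z) :
    gradient (fV k h d) =ᶠ[𝓝 z] fun w => gradCoeffX k h d w • coordProj (xCoords k h) w
      + gradCoeffY k h d w • coordProj (xCoords k h)ᶜ w := by
  have hcont : Continuous (vG k h) :=
    continuous_iff_continuousAt.2 fun _ => hasGradientAt_vG.hasFDerivAt.continuousAt
  filter_upwards [(isOpen_lt continuous_const hcont).mem_nhds hv] with w hw
  exact (hasGradientAt_fV hw).gradient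

theorem norm_gradient_fV_sq (hv : 0 < vG k h z) :
    ‖gradient (fV k h d) z‖ ^ 2 =
      ((h : ℝ) - 1) / 4 * uG k h z * vG k h z ^ (2 * d)
        + ((k : ℝ) - 1) / 4 * vG k h z *
            (d * uG k h z * vG k h z ^ (d - 1) - (d + 1) * vG k h z ^ d) ^ 2 := by
  rw [(hasGradientAt_fV hv).gradient, norm_smul_coordProj_add_smul_coordProj_compl_sq,
    two_mul, Real.rpow_add hv]
  unfold gradCoeffX gradCoeffY
  generalize vG k h z ^ d = q
  generalize vG k h z ^ (d - 1) = p
  rw [uG_eq, vG_eq]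
  ring

theorem norm_gradient_fV_pow_three_mul_divg (hv : 0 < vG k h z)
    (h0 : gradient (fV k h d) z ≠ 0) :
    ‖gradient (fV k h d) z‖ ^ 3 *
        divg (fun w => ‖gradient (fV k h d) w‖⁻¹ • gradient (fV k h d) w) z =
      ((h : ℝ) - 1) * ((k : ℝ) - 1) / 8 * (uG k h z - vG k h z) *
        vG k h z ^ (3 * d - 2) *
        (d ^ 3 * ((k : ℝ) - 1) * uG k h z ^ 2
          + d * ((h : ℝ) - 2 + d + 2 * d ^ 2 - 2 * d * (1 + d) * (k : ℝ))
              * uG k h z * vG k h z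
          + (d + 1) ^ 2 * (d * ((k : ℝ) - 1) - 1) * vG k h z ^ 2) := by
  rw [norm_pow_three_mul_divg_normalize_biradial (hasGradientAt_gradCoeffX hv)
    (hasGradientAt_gradCoeffY hv) (gradient_fV_eventuallyEq hv) h0, card_xCoords,
    card_xCoords_compl]
  -- In terms of `w = v ^ (d - 2)` every power of `v` is a monomial, so no division remains.
  have hd1 : vG k h z ^ (d - 1) = vG k h z ^ (d - 2) * vG k h z := by
    rw [← Real.rpow_add_one hv.ne']; ring_nf
  have hd : vG k h z ^ d = vG k h z ^ (d - 2) * vG k h z ^ 2 := by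
    rw [← Real.rpow_natCast, ← Real.rpow_add hv]; ring_nf
  have hd3 : vG k h z ^ (3 * d - 2) = (vG k h z ^ (d - 2)) ^ 3 * vG k h z ^ 4 := by
    rw [← Real.rpow_natCast, ← Real.rpow_natCast, ← Real.rpow_mul hv.le, ← Real.rpow_add hv]
    ring_nf
  unfold gradCoeffX gradCoeffY
  rw [hd1, hd, hd3]
  generalize vG k h z ^ (d - 2) = w
  rw [uG_eq, vG_eq]
  ring

end LawsonFunction

theorem stmt6_general (k h : ℕ) (hk : 2 ≤ k) (d : ℝ)
    (z : EuclideanSpace ℝ (Fin (k + h))) (hy : nY k h z ≠ 0) :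
    ‖gradient (fV k h d) z‖ ^ 2 =
      ((h : ℝ) - 1) / 4 * uG k h z * vG k h z ^ (2 * d)
        + ((k : ℝ) - 1) / 4 * vG k h z *
            (d * uG k h z * vG k h z ^ (d - 1) - (d + 1) * vG k h z ^ d) ^ 2 ∧
    (gradient (fV k h d) z ≠ 0 →
      ‖gradient (fV k h d) z‖ ^ 3 *
          divg (fun w => ‖gradient (fV k h d) w‖⁻¹ • gradient (fV k h d) w) z =
        ((h : ℝ) - 1) * ((k : ℝ) - 1) / 8 * (uG k h z - vG k h z) *
          vG k h z ^ (3 * d - 2) *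
          (d ^ 3 * ((k : ℝ) - 1) * uG k h z ^ 2
            + d * ((h : ℝ) - 2 + d + 2 * d ^ 2 - 2 * d * (1 + d) * (k : ℝ))
                * uG k h z * vG k h z
            + (d + 1) ^ 2 * (d * ((k : ℝ) - 1) - 1) * vG k h z ^ 2)) :=
  ⟨norm_gradient_fV_sq (vG_pos hk hy), norm_gradient_fV_pow_three_mul_divg (vG_pos hk hy)⟩

/-- The formulas for `|∇f|^2` and `|∇f|^3 · div(∇f/|∇f|)` when `f = (1/4)(u-v)v^d`
(Section 3.2 of the paper). -/
theorem stmt6 (k h : ℕ) (hk : 2 ≤ k) (hh : 2 ≤ h) (d : ℝ) (hd : 0 < d)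
    (z : EuclideanSpace ℝ (Fin (k + h))) (hy : nY k h z ≠ 0) :
    ‖gradient (fV k h d) z‖ ^ 2 =
      ((h : ℝ) - 1) / 4 * uG k h z * vG k h z ^ (2 * d)
        + ((k : ℝ) - 1) / 4 * vG k h z *
            (d * uG k h z * vG k h z ^ (d - 1) - (d + 1) * vG k h z ^ d) ^ 2 ∧
    (gradient (fV k h d) z ≠ 0 →
      ‖gradient (fV k h d) z‖ ^ 3 *
          divg (fun w => ‖gradient (fV k h d) w‖⁻¹ • gradient (fV k h d) w) z =
        ((h : ℝ) - 1) * ((k : ℝ) - 1) / 8 * (uG k h z - vG k h z) *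
          vG k h z ^ (3 * d - 2) *
          (d ^ 3 * ((k : ℝ) - 1) * uG k h z ^ 2
            + d * ((h : ℝ) - 2 + d + 2 * d ^ 2 - 2 * d * (1 + d) * (k : ℝ))
                * uG k h z * vG k h z
            + (d + 1) ^ 2 * (d * ((k : ℝ) - 1) - 1) * vG k h z ^ 2)) :=
  stmt6_general k h hk d z hy
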